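/- arXiv:0710.0399 — 5 statements merged into one kernel-verified Lean document; each statement's English description precedes it below -/
import Mathlib

section
/- If θ is irrational, then for every real number φ not in ℤθ + ℤ, the inhomogeneous approximation constant L(θ,φ) = liminf_{|q|→∞} |q|·‖qθ − φ‖ (over nonzero integers q) satisfies L(θ,φ) ≤ 1/4. -/
/-!
Take a good rational approximation `p / q` of `θ`, so that `D = q θ - p` satisfies
`0 < |D| q ≤ 1`, and put `σ = q φ - c` with `c = round (q φ)`, so `|σ| ≤ 1 / 2`. For every `X`
with `p X ≡ c (mod q)` the number `X θ - φ` lies within `|D X - σ| / q` of an integer, whence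
`|X| ‖X θ - φ‖ ≤ |D X (D X - σ)| / (|D| q)`. On this residue class `D X` runs through an
arithmetic progression of step `γ = |D| q ≤ 1`, and one of the two terms `t` bracketing `0`
satisfies `|t (t - σ)| ≤ γ / 4`. The resulting `X` also has `‖X θ - φ‖ ≤ 2 / q`; as `q` can be
taken arbitrarily large and `‖X θ - φ‖` never vanishes, this yields infinitely many `X` with
`|X| ‖X θ - φ‖ ≤ 1 / 4`.
-/

/-- Distance from a real number to the nearest integer. -/
noncomputable def distNearestInt (x : ℝ) : ℝ := |x - round x|

/-- The inhomogeneous approximation constant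
`L(θ,φ) = liminf_{|q|→∞, q ∈ ℤ} |q|·‖qθ − φ‖`. -/
noncomputable def Lconst (θ φ : ℝ) : ℝ :=
  Filter.liminf (fun q : ℤ => |(q : ℝ)| * distNearestInt (q * θ - φ)) Filter.cofinite

lemma distNearestInt_nonneg (x : ℝ) : 0 ≤ distNearestInt x := abs_nonneg _

lemma distNearestInt_le_of_mul_sub_intCast_eq {x q e : ℝ} (hq : 0 < q) (n : ℤ)
    (h : q * (x - n) = e) : distNearestInt x ≤ |e| / q := by
  rw [le_div_iff₀ hq, ← h, abs_mul, abs_of_pos hq, mul_comm]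
  exact mul_le_mul_of_nonneg_left (round_le x n) hq.le

lemma distNearestInt_mul_sub_pos {θ φ : ℝ} (hφ : ∀ a c : ℤ, φ ≠ a * θ + c) (X : ℤ) :
    0 < distNearestInt (X * θ - φ) := by
  refine abs_pos.mpr fun h => hφ X (-round ((X : ℝ) * θ - φ)) ?_
  push_cast
  linarith

lemma abs_mul_sub_le_or_abs_mul_add_le {u v σ : ℝ} (hσ : |σ| ≤ 1 / 2) (hu : 0 ≤ u) (hv : 0 ≤ v)
    (huv : u + v ≤ 1) :
    |u * (u - σ)| ≤ (u + v) / 4 ∨ |v * (v + σ)| ≤ (u + v) / 4 := by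
  wlog hσ0 : 0 ≤ σ generalizing u v σ
  · have := this (σ := -σ) (by rwa [abs_neg]) hv hu (by linarith) (by linarith)
    rwa [add_comm v u, sub_neg_eq_add, ← sub_eq_add_neg, or_comm] at this
  have hσ' : σ ≤ 1 / 2 := (abs_le.mp hσ).2
  by_contra! ⟨hu', hv'⟩
  rw [abs_of_nonneg (by positivity : 0 ≤ v * (v + σ))] at hv'
  have hγ : 0 < u + v := by nlinarith
  rcases le_or_gt σ u with hσu | huσ
  · rw [abs_of_nonneg (by nlinarith)] at hu'
    -- with `a = 2u - σ`, `b = 2v + σ`: `a, b > √(u + v + σ²)` but `a + b = 2 (u + v) ≤ 2`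
    have hab : (2 * u - σ) * (2 * v + σ) > u + v + σ ^ 2 := by
      rcases le_total (2 * u - σ) (2 * v + σ) with h | h <;> nlinarith
    nlinarith
  · rw [abs_of_nonpos (by nlinarith)] at hu'
    have hvu : v < u := by nlinarith
    have hσvu : v - u + σ > 1 / 2 := by nlinarith
    linarith

lemma exists_int_abs_add_mul_le_and_abs_mul_le {x σ γ : ℝ} (hσ : |σ| ≤ 1 / 2) (hγ : 0 < γ)
    (hγ1 : γ ≤ 1) :
    ∃ m : ℤ, |x + m * γ| ≤ γ ∧ |(x + m * γ) * (x + m * γ - σ)| ≤ γ / 4 := by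
  set u := x - ⌊x / γ⌋ * γ with hu
  have hu0 : 0 ≤ u := by
    have := Int.floor_le (x / γ)
    rw [le_div_iff₀ hγ] at this
    linarith
  have huγ : u ≤ γ := by
    have := Int.lt_floor_add_one (x / γ)
    rw [div_lt_iff₀ hγ] at this
    linarith
  rcases abs_mul_sub_le_or_abs_mul_add_le hσ hu0 (sub_nonneg.mpr huγ) (by linarith) with h | h
  · refine ⟨-⌊x / γ⌋, ?_, ?_⟩ <;> push_cast <;> rw [neg_mul, ← sub_eq_add_neg, ← hu]
    · rwa [abs_of_nonneg hu0]
    · simpa using h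
  · refine ⟨-⌊x / γ⌋ - 1, ?_, ?_⟩ <;> push_cast
    · rw [abs_le]; constructor <;> linarith
    · convert h using 2 <;> ring

lemma finite_setOf_den_le_and_abs_sub_lt_one (x : ℝ) (B : ℕ) :
    {r : ℚ | r.den ≤ B ∧ |x - r| < 1}.Finite := by
  set M : ℤ := ⌈(|x| + 1) * B⌉
  refine ((Set.finite_Icc (-M) M).prod (Set.finite_Iic B)).preimage
    (f := fun r : ℚ => (r.num, r.den)) (fun r _ s _ h => ?_) |>.subset fun r ⟨hB, hr⟩ => ?_
  · simp only [Prod.mk.injEq] at h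
    exact Rat.ext h.1 h.2
  · refine ⟨abs_le.mp ?_, hB⟩
    have hnum : (r.num : ℝ) = r * r.den := by simp [Rat.cast_def]
    have : |(r.num : ℝ)| ≤ (|x| + 1) * B := by
      rw [hnum, abs_mul, Nat.abs_cast]
      gcongr
      · linarith [abs_sub_abs_le_abs_sub (r : ℝ) x, abs_sub_comm (r : ℝ) x]
    exact_mod_cast this.trans (Int.le_ceil _)

lemma Irrational.exists_rat_abs_sub_lt_and_lt_den {x : ℝ} (hx : Irrational x) (B : ℕ) :
    ∃ r : ℚ, |x - r| < 1 / (r.den : ℝ) ^ 2 ∧ B < r.den := by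
  obtain ⟨r, hr, hrB⟩ := ((Real.infinite_rat_abs_sub_lt_one_div_den_sq_of_irrational hx).sdiff
    (finite_setOf_den_le_and_abs_sub_lt_one x B)).nonempty
  have hr1 : |x - r| < 1 := hr.trans_le <| by
    rw [div_le_one (by positivity)]
    exact one_le_pow₀ (mod_cast r.pos)
  exact ⟨r, hr, by simpa [hr1] using hrB⟩

lemma Rat.abs_den_mul_sub_num_mul_den_lt_one {x : ℝ} {r : ℚ}
    (hr : |x - r| < 1 / (r.den : ℝ) ^ 2) : |r.den * x - r.num| * r.den < 1 := by
  have hq : (0 : ℝ) < r.den := mod_cast r.pos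
  have : (r.den : ℝ) * x - r.num = r.den * (x - r) := by rw [Rat.cast_def]; field_simp
  rw [this, abs_mul, Nat.abs_cast, lt_div_iff₀ (by positivity)] at *
  nlinarith

lemma exists_abs_mul_distNearestInt_le {θ : ℝ} (φ : ℝ) {r : ℚ} (hθr : θ ≠ r)
    (hr : |θ - r| < 1 / (r.den : ℝ) ^ 2) :
    ∃ X : ℤ, |(X : ℝ)| * distNearestInt (X * θ - φ) ≤ 1 / 4 ∧
      distNearestInt (X * θ - φ) ≤ 2 / r.den := by
  set p := r.num
  set q : ℕ := r.den
  have hq : (0 : ℝ) < q := mod_cast r.pos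
  set D : ℝ := q * θ - p
  have hD0 : 0 < |D| := abs_pos.mpr fun h => hθr <| by
    rw [Rat.cast_def]; field_simp; linarith
  have hγ1 : |D| * q ≤ 1 := (Rat.abs_den_mul_sub_num_mul_den_lt_one hr).le
  set s : ℤ := (SignType.sign D : ℤ)
  have hs : (s : ℝ) * D = |D| := by simp [s]
  set c := round ((q : ℝ) * φ)
  set σ : ℝ := q * φ - c
  obtain ⟨a, b, hab⟩ : IsCoprime p q := Int.isCoprime_iff_gcd_eq_one.mpr r.reduced
  have hab' : (a * p + b * q : ℝ) = 1 := mod_cast hab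
  -- `p X ≡ c (mod q)` exactly for `X ≡ a c (mod q)`
  obtain ⟨m, hmγ, hm⟩ := exists_int_abs_add_mul_le_and_abs_mul_le (x := D * (a * c))
    (abs_sub_round (q * φ)) (mul_pos hD0 hq) hγ1
  set X : ℤ := a * c + m * s * q
  have hDX : D * X = D * (a * c) + m * (|D| * q) := by
    simp only [X, ← hs]; push_cast; ring
  have hdist : distNearestInt (X * θ - φ) ≤ |D * X - σ| / q :=
    distNearestInt_le_of_mul_sub_intCast_eq hq (-b * c + p * m * s) <| by
      simp only [X, σ, D]; push_cast; linear_combination (c : ℝ) * hab'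
  refine ⟨X, ?_, hdist.trans ?_⟩
  · have hX : |(X : ℝ)| = |D * X| / |D| := by rw [abs_mul, mul_div_cancel_left₀ _ hD0.ne']
    calc |(X : ℝ)| * distNearestInt (X * θ - φ) ≤ |D * X| / |D| * (|D * X - σ| / q) := by
          rw [hX]; gcongr
      _ = |D * X * (D * X - σ)| / (|D| * q) := by
          rw [abs_mul (D * X), div_mul_div_comm]
      _ ≤ 1 / 4 := by
          rw [div_le_iff₀ (mul_pos hD0 hq), hDX]; linarith
  · gcongr
    calc |D * X - σ| ≤ |D * X| + |σ| := abs_sub _ _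
      _ ≤ 1 + 1 / 2 := by rw [hDX]; gcongr; exacts [hmγ.trans hγ1, abs_sub_round _]
      _ ≤ 2 := by norm_num

lemma infinite_setOf_abs_mul_distNearestInt_le {θ φ : ℝ} (hθ : Irrational θ)
    (hφ : ∀ a c : ℤ, φ ≠ a * θ + c) :
    {X : ℤ | |(X : ℝ)| * distNearestInt (X * θ - φ) ≤ 1 / 4}.Infinite := by
  refine Set.Infinite.of_image (fun X : ℤ => (distNearestInt (X * θ - φ))⁻¹)
    (Set.infinite_of_not_bddAbove fun ⟨M, hM⟩ => ?_)
  obtain ⟨r, hr, hrM⟩ := hθ.exists_rat_abs_sub_lt_and_lt_den ⌈2 * M⌉₊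
  obtain ⟨X, hXS, hX⟩ := exists_abs_mul_distNearestInt_le φ (hθ.ne_rat r) hr
  have hXM : (distNearestInt (X * θ - φ))⁻¹ ≤ M := hM ⟨X, hXS, rfl⟩
  have hrX : (r.den : ℝ) / 2 ≤ (distNearestInt (X * θ - φ))⁻¹ := by
    rw [← inv_div]; exact inv_anti₀ (distNearestInt_mul_sub_pos hφ X) hX
  have : 2 * M < r.den := (Nat.le_ceil _).trans_lt (mod_cast hrM)
  linarith

/-- If θ is irrational, then for every real φ not in ℤθ + ℤ, L(θ,φ) ≤ 1/4. -/
theorem minkowski_inhomogeneous (θ : ℝ) (hθ : Irrational θ)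
    (φ : ℝ) (hφ : ∀ a c : ℤ, φ ≠ a * θ + c) :
    Lconst θ φ ≤ 1 / 4 :=
  Filter.liminf_le_of_frequently_le
    (Filter.frequently_cofinite_iff_infinite.mpr (infinite_setOf_abs_mul_distNearestInt_le hθ hφ))
    (Filter.isBoundedUnder_of ⟨0, fun _ => mul_nonneg (abs_nonneg _) (distNearestInt_nonneg _)⟩)
end

section
/- Let θ be irrational with convergents 𝒫ᵢ, and suppose θ has partial quotients b_{I_j+1} = a_j tending to infinity along a subsequence of indices I_j (leaping subscripts), with all other partial quotients bounded. Let φ = (rθ + m)/n be in reduced form. If there exists an integer g such that g·𝒫_{I_j} ≡ (m, −r) (mod n) for infinitely many leaping subscripts I_j, then L(θ, φ) = 0. -/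
open Filter Topology

lemma distNearestInt_le (x : ℝ) (k : ℤ) : distNearestInt x ≤ |x - k| := round_le x k

lemma liminf_cofinite_eq_zero_of_tendsto {α ι : Type*} {f : α → ℝ} (hf : ∀ a, 0 ≤ f a)
    {l : Filter ι} [l.NeBot] {Q : ι → α} (hQ : Tendsto Q l cofinite)
    (hfQ : Tendsto (f ∘ Q) l (𝓝 0)) : liminf f cofinite = 0 := by
  have hsmall : ∀ ε > 0, ∃ᶠ a in cofinite, f a ≤ ε := fun ε hε =>
    hQ.frequently (hfQ.eventually (eventually_le_nhds hε)).frequently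
  refine le_antisymm (le_of_forall_pos_le_add fun ε hε => ?_) ?_
  · rw [zero_add]
    exact liminf_le_of_frequently_le (hsmall ε hε) (isBoundedUnder_of ⟨0, hf⟩)
  · exact le_liminf_of_le (.of_frequently_le (hsmall 1 one_pos)) (.of_forall hf)

lemma exists_ne_zero_modEq (g : ℤ) {n : ℤ} (hn : n ≠ 0) : ∃ g' : ℤ, g' ≠ 0 ∧ g' ≡ g [ZMOD n] := by
  rcases eq_or_ne g 0 with rfl | hg
  · exact ⟨n, hn, Int.modEq_zero_iff_dvd.2 dvd_rfl⟩
  · exact ⟨g, hg, rfl⟩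

lemma distNearestInt_le_of_modEq {n : ℕ} (hn : 0 < n) {r m g P Q Q' : ℤ}
    (hP : g * P ≡ m [ZMOD n]) (hQ' : n * Q' = g * Q + r) (θ : ℝ) :
    distNearestInt (Q' * θ - (r * θ + m) / n) ≤ |g| * |Q * θ - P| / n := by
  obtain ⟨k, hk⟩ := hP.symm.dvd
  have hnR : (0 : ℝ) < n := by exact_mod_cast hn
  have hQ'R : (n : ℝ) * Q' = g * Q + r := by exact_mod_cast hQ'
  have hkR : (n : ℝ) * k = g * P - m := by exact_mod_cast hk.symm
  have hdiff : Q' * θ - (r * θ + m) / n - k = g * (Q * θ - P) / n := by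
    field_simp
    linear_combination θ * hQ'R - hkR
  calc distNearestInt (Q' * θ - (r * θ + m) / n) ≤ |g * (Q * θ - P) / n| := by
        rw [← hdiff]; exact distNearestInt_le _ k
    _ = |g| * |Q * θ - P| / n := by
        rw [abs_div, abs_mul, abs_of_pos hnR, Int.cast_abs]

lemma natCast_mul_abs_mem_Icc {n : ℕ} {r g Q Q' : ℤ} (hg : g ≠ 0) (hQ : 1 ≤ Q)
    (hQ' : n * Q' = g * Q + r) : n * |Q'| ∈ Set.Icc (Q - |r|) ((|g| + |r|) * Q) := by
  have hg1 : 1 ≤ |g| := Int.one_le_abs hg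
  rw [← Nat.abs_cast, ← abs_mul, hQ']
  constructor
  · have := abs_sub_abs_le_abs_sub (g * Q) (-r)
    rw [abs_mul, abs_neg, sub_neg_eq_add, abs_of_pos (by omega : 0 < Q)] at this
    nlinarith
  · have := abs_add_le (g * Q) r
    rw [abs_mul, abs_of_pos (by omega : 0 < Q)] at this
    nlinarith [abs_nonneg r]

theorem Lconst_eq_zero_of_modEq_of_tendsto {ι : Type*} {l : Filter ι} [l.NeBot] (θ : ℝ)
    {n : ℕ} (hn : 0 < n) {r m g : ℤ} (hg : g ≠ 0) {P Q : ι → ℤ} (hQ : Tendsto Q l atTop)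
    (hmod : ∀ᶠ j in l, g * P j ≡ m [ZMOD n] ∧ g * Q j ≡ -r [ZMOD n])
    (happrox : Tendsto (fun j => (Q j : ℝ) * |Q j * θ - P j|) l (𝓝 0)) :
    Lconst θ ((r * θ + m) / n) = 0 := by
  set Q' : ι → ℤ := fun j => (g * Q j + r) / n
  have hQ' : ∀ᶠ j in l, n * Q' j = g * Q j + r := hmod.mono fun j hj =>
    Int.mul_ediv_cancel' (by simpa using hj.2.symm.dvd)
  have hbounds : ∀ᶠ j in l, n * |Q' j| ∈ Set.Icc (Q j - |r|) ((|g| + |r|) * Q j) := by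
    filter_upwards [hQ', hQ.eventually_ge_atTop 1] with j hj hQ1
    exact natCast_mul_abs_mem_Icc hg hQ1 hj
  have hQ'_tendsto : Tendsto Q' l cofinite := by
    rw [Int.cofinite_eq, ← comap_abs_atTop, tendsto_comap_iff]
    refine Tendsto.atTop_of_const_mul₀ (c := (n : ℤ)) (by omega) ?_
    exact tendsto_atTop_mono' l (hbounds.mono fun j hj => hj.1)
      (tendsto_atTop_add_const_right l _ hQ)
  have hf : ∀ a : ℤ, 0 ≤ |(a : ℝ)| * distNearestInt (a * θ - (r * θ + m) / n) :=
    fun a => mul_nonneg (abs_nonneg _) (abs_nonneg _)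
  refine liminf_cofinite_eq_zero_of_tendsto hf hQ'_tendsto ?_
  have hC : Tendsto (fun j => (|g| + |r|) * |g| / n ^ 2 * ((Q j : ℝ) * |Q j * θ - P j|)) l
      (𝓝 0) := by
    simpa using happrox.const_mul ((|g| + |r|) * |g| / n ^ 2 : ℝ)
  refine squeeze_zero' (.of_forall fun j => hf (Q' j)) ?_ hC
  filter_upwards [hmod, hQ', hbounds] with j hj hj' hjb
  have hnR : (0 : ℝ) < n := by exact_mod_cast hn
  have hup : |(Q' j : ℝ)| ≤ (|g| + |r|) * Q j / n := by
    rw [le_div_iff₀ hnR, mul_comm]; exact_mod_cast hjb.2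
  calc |(Q' j : ℝ)| * distNearestInt (Q' j * θ - (r * θ + m) / n)
      ≤ ((|g| + |r|) * Q j / n) * (|g| * |Q j * θ - P j| / n) :=
        mul_le_mul hup (distNearestInt_le_of_modEq hn hj.1 hj' θ)
          (abs_nonneg _) ((abs_nonneg _).trans hup)
    _ = (|g| + |r|) * |g| / n ^ 2 * ((Q j : ℝ) * |Q j * θ - P j|) := by ring

section Convergents

variable {b : ℕ → ℤ} {p q : ℤ → ℤ}

lemma den_pos (hb : ∀ i : ℕ, 1 ≤ i → 1 ≤ b i) (hqm1 : q (-1) = 0) (hq0 : q 0 = 1)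
    (hqrec : ∀ i : ℕ, q (i + 1) = b (i + 1) * q i + q (i - 1)) (i : ℕ) : 0 < q i := by
  suffices ∀ i : ℕ, 0 ≤ q (i - 1) ∧ 0 < q i from (this i).2
  intro i
  induction i with
  | zero => simp [hqm1, hq0]
  | succ i ih =>
    push_cast
    rw [add_sub_cancel_right, hqrec]
    exact ⟨ih.2.le, by nlinarith [hb (i + 1) (by omega)]⟩

lemma mul_den_le_den_succ (hb : ∀ i : ℕ, 1 ≤ i → 1 ≤ b i) (hqm1 : q (-1) = 0) (hq0 : q 0 = 1)
    (hqrec : ∀ i : ℕ, q (i + 1) = b (i + 1) * q i + q (i - 1)) (i : ℕ) :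
    b (i + 1) * q i ≤ q (i + 1) := by
  rw [hqrec]
  rcases i with _ | i
  · simp [hqm1]
  · have := den_pos hb hqm1 hq0 hqrec i
    push_cast
    rw [add_sub_cancel_right]
    omega

lemma den_le_den_succ (hb : ∀ i : ℕ, 1 ≤ i → 1 ≤ b i) (hqm1 : q (-1) = 0) (hq0 : q 0 = 1)
    (hqrec : ∀ i : ℕ, q (i + 1) = b (i + 1) * q i + q (i - 1)) (i : ℕ) : q i ≤ q (i + 1) := by
  nlinarith [mul_den_le_den_succ hb hqm1 hq0 hqrec i, den_pos hb hqm1 hq0 hqrec i,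
    hb (i + 1) (by omega)]

lemma den_add_den_succ_le (hb : ∀ i : ℕ, 1 ≤ i → 1 ≤ b i) (hqm1 : q (-1) = 0) (hq0 : q 0 = 1)
    (hqrec : ∀ i : ℕ, q (i + 1) = b (i + 1) * q i + q (i - 1)) (i : ℕ) :
    q i + q (i + 1) ≤ q (i + 1 + 1) := by
  have h := hqrec (i + 1)
  have hpos := den_pos hb hqm1 hq0 hqrec (i + 1)
  push_cast at h hpos
  rw [add_sub_cancel_right] at h
  linarith [le_mul_of_one_le_left hpos.le (hb (i + 1 + 1) (by omega))]

lemma natCast_le_den (hb : ∀ i : ℕ, 1 ≤ i → 1 ≤ b i) (hqm1 : q (-1) = 0) (hq0 : q 0 = 1)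
    (hqrec : ∀ i : ℕ, q (i + 1) = b (i + 1) * q i + q (i - 1)) (i : ℕ) : (i : ℤ) ≤ q i := by
  suffices ∀ i : ℕ, (i : ℤ) ≤ q i ∧ (i : ℤ) + 1 ≤ q (i + 1) from (this i).1
  intro i
  induction i with
  | zero =>
    have := den_pos hb hqm1 hq0 hqrec 1
    simp only [Nat.cast_zero, Nat.cast_one, zero_add, hq0] at this ⊢
    omega
  | succ i ih =>
    push_cast
    have := den_add_den_succ_le hb hqm1 hq0 hqrec i
    have := den_pos hb hqm1 hq0 hqrec i
    exact ⟨ih.2, by omega⟩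

lemma two_pow_mul_le_den_mul_den (hb : ∀ i : ℕ, 1 ≤ i → 1 ≤ b i) (hqm1 : q (-1) = 0)
    (hq0 : q 0 = 1) (hqrec : ∀ i : ℕ, q (i + 1) = b (i + 1) * q i + q (i - 1)) (i k : ℕ) :
    2 ^ k * (q i * q (i + 1)) ≤ q (i + k) * q (i + k + 1) := by
  induction k with
  | zero => simp
  | succ k ih =>
    have h1 := den_le_den_succ hb hqm1 hq0 hqrec (i + k)
    have h2 := den_add_den_succ_le hb hqm1 hq0 hqrec (i + k)
    have h3 := den_pos hb hqm1 hq0 hqrec (i + k + 1)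
    push_cast at h1 h2 h3 ⊢
    rw [pow_succ, ← add_assoc]
    nlinarith

lemma num_mul_den_sub_num_mul_den (hpm1 : p (-1) = 1) (hqm1 : q (-1) = 0) (hq0 : q 0 = 1)
    (hprec : ∀ i : ℕ, p (i + 1) = b (i + 1) * p i + p (i - 1))
    (hqrec : ∀ i : ℕ, q (i + 1) = b (i + 1) * q i + q (i - 1)) (i : ℕ) :
    p (i + 1) * q i - p i * q (i + 1) = (-1) ^ i := by
  induction i with
  | zero =>
    have hp1 := hprec 0
    have hq1 := hqrec 0
    simp only [Nat.cast_zero, zero_add, zero_sub] at hp1 hq1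
    simp only [Nat.cast_zero, zero_add, pow_zero, hp1, hq1, hpm1, hqm1, hq0]
    ring
  | succ i ih =>
    rw [hprec, hqrec]
    push_cast
    rw [add_sub_cancel_right, pow_succ]
    linear_combination -ih

lemma abs_num_div_den_sub_succ (hb : ∀ i : ℕ, 1 ≤ i → 1 ≤ b i) (hpm1 : p (-1) = 1)
    (hqm1 : q (-1) = 0) (hq0 : q 0 = 1)
    (hprec : ∀ i : ℕ, p (i + 1) = b (i + 1) * p i + p (i - 1))
    (hqrec : ∀ i : ℕ, q (i + 1) = b (i + 1) * q i + q (i - 1)) (i : ℕ) :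
    |(p i : ℝ) / q i - p (i + 1) / q (i + 1)| = 1 / (q i * q (i + 1)) := by
  have h0 : (0 : ℝ) < q i := by exact_mod_cast den_pos hb hqm1 hq0 hqrec i
  have h1 : (0 : ℝ) < q (i + 1) := by exact_mod_cast den_pos hb hqm1 hq0 hqrec (i + 1)
  have hdet : (p (i + 1) * q i - p i * q (i + 1) : ℝ) = (-1) ^ i := by
    exact_mod_cast num_mul_den_sub_num_mul_den hpm1 hqm1 hq0 hprec hqrec i
  rw [div_sub_div _ _ h0.ne' h1.ne', abs_div, abs_of_pos (mul_pos h0 h1),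
    show (p i * q (i + 1) - q i * p (i + 1) : ℝ) = -(-1) ^ i by linear_combination -hdet]
  simp

lemma abs_sub_num_div_den_le (hb : ∀ i : ℕ, 1 ≤ i → 1 ≤ b i) (hpm1 : p (-1) = 1)
    (hqm1 : q (-1) = 0) (hq0 : q 0 = 1)
    (hprec : ∀ i : ℕ, p (i + 1) = b (i + 1) * p i + p (i - 1))
    (hqrec : ∀ i : ℕ, q (i + 1) = b (i + 1) * q i + q (i - 1)) {θ : ℝ}
    (hconv : Tendsto (fun i : ℕ => (p i : ℝ) / q i) atTop (𝓝 θ)) (i : ℕ) :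
    |θ - p i / q i| ≤ 2 / (q i * q (i + 1)) := by
  have hpos : (0 : ℝ) < q i * q (i + 1) := by
    exact_mod_cast mul_pos (den_pos hb hqm1 hq0 hqrec i) (den_pos hb hqm1 hq0 hqrec (i + 1))
  set x : ℕ → ℝ := fun j => (p j : ℝ) / q j with hx
  have hstep : ∀ k : ℕ, dist (x (i + k)) (x (i + k + 1)) ≤ 2 / (q i * q (i + 1)) / 2 / 2 ^ k := by
    intro k
    have hdouble : (2 ^ k * (q i * q (i + 1)) : ℝ) ≤ q ((i + k : ℕ)) * q ((i + k : ℕ) + 1) := by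
      exact_mod_cast two_pow_mul_le_den_mul_den hb hqm1 hq0 hqrec i k
    simp only [hx, Real.dist_eq, Nat.cast_succ]
    rw [abs_num_div_den_sub_succ hb hpm1 hqm1 hq0 hprec hqrec, div_div, div_div,
      div_le_div_iff₀ (lt_of_lt_of_le (by positivity) hdouble) (by positivity)]
    linarith
  rw [abs_sub_comm, ← Real.dist_eq]
  simpa using dist_le_of_le_geometric_two_of_tendsto₀ hstep
    (hconv.comp (tendsto_add_atTop_nat i) |>.congr fun k => by simp [x, add_comm])

lemma den_mul_abs_den_mul_sub_num_le (hb : ∀ i : ℕ, 1 ≤ i → 1 ≤ b i) (hpm1 : p (-1) = 1)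
    (hqm1 : q (-1) = 0) (hq0 : q 0 = 1)
    (hprec : ∀ i : ℕ, p (i + 1) = b (i + 1) * p i + p (i - 1))
    (hqrec : ∀ i : ℕ, q (i + 1) = b (i + 1) * q i + q (i - 1)) {θ : ℝ}
    (hconv : Tendsto (fun i : ℕ => (p i : ℝ) / q i) atTop (𝓝 θ)) (i : ℕ) :
    (q i : ℝ) * |q i * θ - p i| ≤ 2 / b (i + 1) := by
  have h0 : (0 : ℝ) < q i := by exact_mod_cast den_pos hb hqm1 hq0 hqrec i
  have h1 : (0 : ℝ) < q (i + 1) := by exact_mod_cast den_pos hb hqm1 hq0 hqrec (i + 1)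
  have hb1 : (1 : ℝ) ≤ b (i + 1) := by exact_mod_cast hb (i + 1) (by omega)
  have hmul : (b (i + 1) * q i : ℝ) ≤ q (i + 1) := by
    exact_mod_cast mul_den_le_den_succ hb hqm1 hq0 hqrec i
  calc (q i : ℝ) * |q i * θ - p i| = q i ^ 2 * |θ - p i / q i| := by
        rw [show (q i * θ - p i : ℝ) = q i * (θ - p i / q i) by field_simp, abs_mul,
          abs_of_pos h0]
        ring
    _ ≤ q i ^ 2 * (2 / (q i * q (i + 1))) := by
        gcongr; exact abs_sub_num_div_den_le hb hpm1 hqm1 hq0 hprec hqrec hconv i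
    _ = 2 * q i / q (i + 1) := by field_simp
    _ ≤ 2 / b (i + 1) := by
        rw [div_le_div_iff₀ h1 (by linarith)]; nlinarith

lemma tendsto_den_atTop (hb : ∀ i : ℕ, 1 ≤ i → 1 ≤ b i) (hqm1 : q (-1) = 0) (hq0 : q 0 = 1)
    (hqrec : ∀ i : ℕ, q (i + 1) = b (i + 1) * q i + q (i - 1)) :
    Tendsto (fun i : ℕ => q i) atTop atTop :=
  tendsto_atTop_mono (natCast_le_den hb hqm1 hq0 hqrec) tendsto_natCast_atTop_atTop

lemma tendsto_den_mul_abs_den_mul_sub_num {ι : Type*} {l : Filter ι} {I : ι → ℕ}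
    (hb : ∀ i : ℕ, 1 ≤ i → 1 ≤ b i) (hpm1 : p (-1) = 1) (hqm1 : q (-1) = 0) (hq0 : q 0 = 1)
    (hprec : ∀ i : ℕ, p (i + 1) = b (i + 1) * p i + p (i - 1))
    (hqrec : ∀ i : ℕ, q (i + 1) = b (i + 1) * q i + q (i - 1)) {θ : ℝ}
    (hconv : Tendsto (fun i : ℕ => (p i : ℝ) / q i) atTop (𝓝 θ))
    (ha : Tendsto (fun j => b (I j + 1)) l atTop) :
    Tendsto (fun j => (q (I j) : ℝ) * |q (I j) * θ - p (I j)|) l (𝓝 0) := by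
  refine squeeze_zero (fun j => mul_nonneg ?_ (abs_nonneg _))
    (fun j => den_mul_abs_den_mul_sub_num_le hb hpm1 hqm1 hq0 hprec hqrec hconv (I j)) ?_
  · exact_mod_cast (den_pos hb hqm1 hq0 hqrec (I j)).le
  · simpa [div_eq_mul_inv] using
      (tendsto_intCast_atTop_iff.2 ha).inv_tendsto_atTop.const_mul (2 : ℝ)

end Convergents

theorem Lconst_eq_zero_of_infinitely_many_leapers_general
    (θ : ℝ)
    (b : ℕ → ℤ) (hb : ∀ i : ℕ, 1 ≤ i → 1 ≤ b i)
    (p q : ℤ → ℤ)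
    (hpm1 : p (-1) = 1) (hqm1 : q (-1) = 0)
    (hq0 : q 0 = 1)
    (hprec : ∀ i : ℕ, p ((i : ℤ) + 1) = b (i + 1) * p i + p ((i : ℤ) - 1))
    (hqrec : ∀ i : ℕ, q ((i : ℤ) + 1) = b (i + 1) * q i + q ((i : ℤ) - 1))
    (hconv : Filter.Tendsto (fun i : ℕ => (p i : ℝ) / (q i : ℝ)) Filter.atTop (nhds θ))
    -- leaping subscripts
    (I : ℕ → ℕ) (hI : StrictMono I)
    (ha : Filter.Tendsto (fun j : ℕ => b (I j + 1)) Filter.atTop Filter.atTop)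
    -- φ = (rθ + m)/n in reduced form
    (n : ℕ) (hn : 2 ≤ n) (r m : ℤ)
    (φ : ℝ) (hφ : φ = (r * θ + m) / n)
    (g : ℤ)
    (hinf : {j : ℕ | g * p (I j) ≡ m [ZMOD (n : ℤ)] ∧
                     g * q (I j) ≡ -r [ZMOD (n : ℤ)]}.Infinite) :
    Lconst θ φ = 0 := by
  obtain ⟨g', hg', hgg'⟩ := exists_ne_zero_modEq g (n := n) (by omega)
  set S := {j : ℕ | g * p (I j) ≡ m [ZMOD n] ∧ g * q (I j) ≡ -r [ZMOD n]}
  have : (atTop ⊓ 𝓟 S).NeBot := frequently_iff_neBot.1 (Nat.frequently_atTop_iff_infinite.2 hinf)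
  subst hφ
  refine Lconst_eq_zero_of_modEq_of_tendsto (l := atTop ⊓ 𝓟 S) θ (by omega) hg'
    (P := fun j => p (I j))
    (((tendsto_den_atTop hb hqm1 hq0 hqrec).comp hI.tendsto_atTop).mono_left inf_le_left) ?_
    ((tendsto_den_mul_abs_den_mul_sub_num hb hpm1 hqm1 hq0 hprec hqrec hconv ha).mono_left
      inf_le_left)
  filter_upwards [mem_inf_of_right (mem_principal_self _)] with j hj
  exact ⟨(hgg'.mul_right _).trans hj.1, (hgg'.mul_right _).trans hj.2⟩

/-- Let θ be irrational with convergents `𝒫ᵢ = (pᵢ, qᵢ)`, whose partial quotients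
`b_{I_j+1}` along the (strictly increasing) leaping subscripts `I_j` tend to
infinity while all other partial quotients are bounded.  If `φ = (rθ+m)/n` is in
reduced form and there is an integer `g` with `g·𝒫_{I_j} ≡ (m, −r) (mod n)` for
infinitely many `j`, then `L(θ, φ) = 0`. -/
theorem Lconst_eq_zero_of_infinitely_many_leapers
    (θ : ℝ) (hθ : Irrational θ)
    (b : ℕ → ℤ) (hb : ∀ i : ℕ, 1 ≤ i → 1 ≤ b i)
    (p q : ℤ → ℤ)
    (hpm1 : p (-1) = 1) (hqm1 : q (-1) = 0)
    (hp0 : p 0 = b 0) (hq0 : q 0 = 1)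
    (hprec : ∀ i : ℕ, p ((i : ℤ) + 1) = b (i + 1) * p i + p ((i : ℤ) - 1))
    (hqrec : ∀ i : ℕ, q ((i : ℤ) + 1) = b (i + 1) * q i + q ((i : ℤ) - 1))
    (hconv : Filter.Tendsto (fun i : ℕ => (p i : ℝ) / (q i : ℝ)) Filter.atTop (nhds θ))
    -- leaping subscripts
    (I : ℕ → ℕ) (hI : StrictMono I)
    (ha : Filter.Tendsto (fun j : ℕ => b (I j + 1)) Filter.atTop Filter.atTop)
    (hbdd : ∃ C : ℤ, ∀ i : ℕ, 1 ≤ i → (∀ j : ℕ, i ≠ I j + 1) → b i ≤ C)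
    -- φ = (rθ + m)/n in reduced form
    (n : ℕ) (hn : 2 ≤ n) (r m : ℤ)
    (hr : 0 ≤ r ∧ r < n) (hm : 0 ≤ m ∧ m < n)
    (hgcd : Int.gcd r (Int.gcd m n) = 1)
    (φ : ℝ) (hφ : φ = (r * θ + m) / n)
    (g : ℤ)
    (hinf : {j : ℕ | g * p (I j) ≡ m [ZMOD (n : ℤ)] ∧
                     g * q (I j) ≡ -r [ZMOD (n : ℤ)]}.Infinite) :
    Lconst θ φ = 0 :=
  Lconst_eq_zero_of_infinitely_many_leapers_general θ b hb p q hpm1 hqm1 hq0 hprec hqrec hconv I hI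
    ha n hn r m φ hφ g hinf
end

section
/- Let θ be irrational with convergents 𝒫ᵢ = (pᵢ, qᵢ) and let φ = (rθ + m)/n be in reduced form. For a nonzero integer S, set λ(S) = |S − r/n|·‖Sθ − φ‖ and let R be the nearest integer to Sθ − φ. If 0 < n²·λ(S) < 1/2, then there exist integers i ≥ −1 and g with g invertible modulo n such that (m + Rn, Sn − r) = g·𝒫ᵢ and n²·λ(S) = g²/μᵢ, where μᵢ = [b_{i+1}; b_{i+2}, …] + [0; bᵢ, …, b₁]. -/
open Filter Topology

/-- The recurrence `x_{k+2} = b_{k+1} x_{k+1} + x_k` of the convergents, shifted by one: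
`cfNum b (k + 1) = pₖ` and `cfDen b (k + 1) = qₖ`, while index `0` holds `(p₋₁, q₋₁) = (1, 0)`. -/
def contRec (b : ℕ → ℤ) (x₀ x₁ : ℤ) : ℕ → ℤ
  | 0 => x₀
  | 1 => x₁
  | k + 2 => b (k + 1) * contRec b x₀ x₁ (k + 1) + contRec b x₀ x₁ k

abbrev cfNum (b : ℕ → ℤ) : ℕ → ℤ := contRec b 1 (b 0)

abbrev cfDen (b : ℕ → ℤ) : ℕ → ℤ := contRec b 0 1

noncomputable def cfConv (b : ℕ → ℤ) (k : ℕ) : ℝ := cfNum b (k + 1) / cfDen b (k + 1)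

def cfErr (b : ℕ → ℤ) (θ : ℝ) (k : ℕ) : ℝ := cfDen b k * θ - cfNum b k

section
variable {b : ℕ → ℤ}

theorem contRec_eq_of_rec {u : ℤ → ℤ} (h : ∀ i : ℕ, u (i + 1) = b (i + 1) * u i + u (i - 1)) :
    ∀ k : ℕ, contRec b (u (-1)) (u 0) k = u (k - 1)
  | 0 => by simp [contRec]
  | 1 => by simp [contRec]
  | k + 2 => by
    rw [contRec, contRec_eq_of_rec h (k + 1), contRec_eq_of_rec h k]
    rw [show ((k + 2 : ℕ) : ℤ) - 1 = k + 1 by push_cast; ring]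
    simpa using (h k).symm

theorem contRec_succ_eq_of_rec {u : ℤ → ℤ}
    (h : ∀ i : ℕ, u (i + 1) = b (i + 1) * u i + u (i - 1)) (k : ℕ) :
    contRec b (u (-1)) (u 0) (k + 1) = u k := by
  simpa using contRec_eq_of_rec h (k + 1)

theorem cfNum_mul_cfDen_sub (k : ℕ) :
    cfNum b (k + 1) * cfDen b k - cfNum b k * cfDen b (k + 1) = (-1) ^ (k + 1) := by
  induction k with
  | zero => simp [contRec]
  | succ k ih =>
    simp only [cfNum, cfDen, contRec] at ih ⊢
    linear_combination -ih

theorem cfNum_mul_cfDen_sub_two (k : ℕ) :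
    cfNum b (k + 2) * cfDen b k - cfNum b k * cfDen b (k + 2) = b (k + 1) * (-1) ^ (k + 1) := by
  simp only [cfNum, cfDen, contRec]
  linear_combination b (k + 1) * cfNum_mul_cfDen_sub (b := b) k

theorem cfErr_zero (θ : ℝ) : cfErr b θ 0 = -1 := by simp [cfErr, contRec]

theorem cfErr_one (θ : ℝ) : cfErr b θ 1 = θ - b 0 := by simp [cfErr, contRec]

theorem cfErr_add_two (θ : ℝ) (k : ℕ) :
    cfErr b θ (k + 2) = b (k + 1) * cfErr b θ (k + 1) + cfErr b θ k := by
  simp only [cfErr, cfNum, cfDen, contRec]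
  push_cast
  ring

theorem cfDen_mul_cfErr_succ_sub (θ : ℝ) (k : ℕ) :
    cfDen b k * cfErr b θ (k + 1) - cfErr b θ k * cfDen b (k + 1) = (-1) ^ k := by
  have h : ((cfNum b (k + 1) * cfDen b k - cfNum b k * cfDen b (k + 1) : ℤ) : ℝ)
      = (-1) ^ (k + 1) := by
    exact_mod_cast cfNum_mul_cfDen_sub k
  push_cast at h
  simp only [cfErr]
  linear_combination -h

theorem abs_mul_abs_mul_cfDen_sub (θ : ℝ) (g : ℤ) (k : ℕ) :
    |((g * cfDen b k : ℤ) : ℝ)| * |((g * cfDen b k : ℤ) : ℝ) * θ - ((g * cfNum b k : ℤ) : ℝ)|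
      = g ^ 2 * (|(cfDen b k : ℝ)| * |cfErr b θ k|) := by
  push_cast
  rw [cfErr, ← abs_mul, ← abs_mul, ← sq_abs, ← abs_pow, ← abs_mul]
  congr 1
  ring

theorem exists_eq_cfNum_cfDen_combination (k : ℕ) (A B : ℤ) : ∃ X Y : ℤ,
    B = X * cfNum b (k + 1) + Y * cfNum b (k + 2) ∧
      A = X * cfDen b (k + 1) + Y * cfDen b (k + 2) := by
  have hdet := cfNum_mul_cfDen_sub (b := b) (k + 1)
  have hs : ((-1 : ℤ) ^ k) ^ 2 = 1 := by rw [← pow_mul, pow_mul', neg_one_sq, one_pow]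
  refine ⟨(-1) ^ k * (A * cfNum b (k + 2) - B * cfDen b (k + 2)),
    (-1) ^ k * (B * cfDen b (k + 1) - A * cfNum b (k + 1)), ?_, ?_⟩
  · linear_combination (-(-1) ^ k * B) * hdet - B * hs
  · linear_combination (-(-1) ^ k * A) * hdet - A * hs

theorem eq_neg_cfErr_div {θ : ℝ} (he : ∀ k, cfErr b θ (k + 1) ≠ 0) {t : ℤ → ℝ} (ht0 : t 0 = θ)
    (htrec : ∀ i : ℕ, t (i + 1) = (t i - b i)⁻¹) :
    ∀ k : ℕ, t (k + 1) = -cfErr b θ k / cfErr b θ (k + 1)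
  | 0 => by simpa [ht0, cfErr_zero, cfErr_one] using htrec 0
  | k + 1 => by
    rw [htrec, Nat.cast_succ, eq_neg_cfErr_div he ht0 htrec k, cfErr_add_two,
      inv_eq_iff_eq_inv, inv_div]
    field_simp [he k]
    ring

variable (hb : ∀ i : ℕ, 1 ≤ i → 1 ≤ b i)
include hb

theorem cfDen_nonneg : ∀ k, 0 ≤ cfDen b k
  | 0 => le_rfl
  | 1 => zero_le_one
  | k + 2 => by
    have := hb (k + 1) (by omega)
    have := cfDen_nonneg (k + 1)
    have := cfDen_nonneg k
    simp only [cfDen, contRec] at *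
    positivity

theorem cfDen_add_le (k : ℕ) : cfDen b k + cfDen b (k + 1) ≤ cfDen b (k + 2) := by
  have := hb (k + 1) (by omega)
  have := cfDen_nonneg hb (k + 1)
  simp only [cfDen, contRec] at *
  nlinarith

theorem one_le_cfDen_succ : ∀ k, 1 ≤ cfDen b (k + 1)
  | 0 => le_rfl
  | k + 1 => by linarith [cfDen_add_le hb k, one_le_cfDen_succ k, cfDen_nonneg hb k]

theorem le_cfDen_succ : ∀ k : ℕ, (k : ℤ) ≤ cfDen b (k + 1)
  | 0 => zero_le_one
  | 1 => by simpa using one_le_cfDen_succ hb 1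
  | k + 2 => by
    have h : cfDen b (k + 1) + cfDen b (k + 2) ≤ cfDen b (k + 3) := cfDen_add_le hb (k + 1)
    have := le_cfDen_succ (k + 1)
    have := one_le_cfDen_succ hb k
    push_cast at *
    linarith

theorem exists_cfDen_le_lt {a : ℤ} (ha : 1 ≤ a) :
    ∃ k, cfDen b (k + 1) ≤ a ∧ a < cfDen b (k + 2) := by
  by_contra! h
  have hle : ∀ k, cfDen b (k + 1) ≤ a := fun k => by
    induction k with
    | zero => simpa [contRec] using ha
    | succ k ih => exact h k ih
  have := le_cfDen_succ hb (a.toNat + 1)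
  have := hle (a.toNat + 1)
  omega

theorem cfDen_succ_pos (k : ℕ) : (0 : ℝ) < cfDen b (k + 1) := by
  exact_mod_cast one_le_cfDen_succ hb k

theorem neg_one_pow_mul_cfConv_lt (k : ℕ) :
    (-1) ^ k * cfConv b k < (-1) ^ k * cfConv b (k + 2) := by
  have hQ₁ := cfDen_succ_pos hb k
  have hQ₃ := cfDen_succ_pos hb (k + 2)
  have hb' : (1 : ℝ) ≤ b (k + 2) := by exact_mod_cast hb (k + 2) (by omega)
  have hdet : ((cfNum b (k + 3) * cfDen b (k + 1) - cfNum b (k + 1) * cfDen b (k + 3) : ℤ) : ℝ)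
      = b (k + 2) * (-1) ^ (k + 2) := by
    exact_mod_cast cfNum_mul_cfDen_sub_two (k + 1)
  have hdiff : cfConv b (k + 2) - cfConv b k
      = b (k + 2) * (-1) ^ k / (cfDen b (k + 3) * cfDen b (k + 1)) := by
    rw [cfConv, cfConv, div_sub_div _ _ hQ₃.ne' hQ₁.ne']
    push_cast at hdet
    congr 1
    linear_combination hdet
  have hs : (-1 : ℝ) ^ k * (-1) ^ k = 1 := by rw [← mul_pow]; norm_num
  rw [← sub_pos, ← mul_sub, hdiff, mul_div_assoc', mul_left_comm, hs, mul_one]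
  positivity

theorem neg_one_pow_mul_sub_cfConv_pos {θ : ℝ} (hconv : Tendsto (cfConv b) atTop (𝓝 θ)) (k : ℕ) :
    0 < (-1) ^ k * (θ - cfConv b k) := by
  set f : ℕ → ℝ := fun j => (-1) ^ k * cfConv b (k + 2 * j)
  have hf : StrictMono f := strictMono_nat_of_lt_succ fun j => by
    have h := neg_one_pow_mul_cfConv_lt hb (k + 2 * j)
    rwa [pow_add, pow_mul, neg_one_sq, one_pow, mul_one] at h
  have hlim : Tendsto f atTop (𝓝 ((-1) ^ k * θ)) :=
    (hconv.comp (tendsto_atTop_mono (fun j => show j ≤ k + 2 * j by omega) tendsto_id)).const_mul _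
  have := (hf (Nat.lt_succ_self 0)).trans_le (hf.monotone.ge_of_tendsto hlim 1)
  simp only [f, mul_zero, add_zero] at this
  linarith

theorem neg_one_pow_mul_cfErr_succ_pos {θ : ℝ} (hconv : Tendsto (cfConv b) atTop (𝓝 θ)) (k : ℕ) :
    0 < (-1) ^ k * cfErr b θ (k + 1) := by
  have h : cfErr b θ (k + 1) = cfDen b (k + 1) * (θ - cfConv b k) := by
    rw [cfErr, cfConv]
    field_simp [(cfDen_succ_pos hb k).ne']
  rw [h, mul_left_comm]
  exact mul_pos (cfDen_succ_pos hb k) (neg_one_pow_mul_sub_cfConv_pos hb hconv k)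

theorem inv_neg_cfErr_div_add_cfDen_div {θ : ℝ} {k : ℕ} (hsign : 0 < (-1) ^ k * cfErr b θ (k + 1)) :
    (-cfErr b θ k / cfErr b θ (k + 1) + cfDen b k / cfDen b (k + 1))⁻¹
      = cfDen b (k + 1) * |cfErr b θ (k + 1)| := by
  have hQ := (cfDen_succ_pos hb k).ne'
  have he : cfErr b θ (k + 1) ≠ 0 := fun h => by simp [h] at hsign
  have habs : |cfErr b θ (k + 1)| = (-1) ^ k * cfErr b θ (k + 1) := by
    rw [← abs_of_pos hsign, abs_mul, abs_neg_one_pow, one_mul]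
  have h : -cfErr b θ k / cfErr b θ (k + 1) + cfDen b k / cfDen b (k + 1)
      = (-1) ^ k / (cfDen b (k + 1) * cfErr b θ (k + 1)) := by
    rw [div_add_div _ _ he hQ, ← cfDen_mul_cfErr_succ_sub θ k]
    ring
  have hs : (-1 : ℝ) ^ k * (-1) ^ k = 1 := by rw [← mul_pow]; norm_num
  rw [habs, h, inv_div, div_eq_iff (pow_ne_zero k (by norm_num))]
  linear_combination -(cfDen b (k + 1) * cfErr b θ (k + 1)) * hs

theorem abs_cfErr_succ_le {θ : ℝ} (hsign : ∀ k, 0 < (-1) ^ k * cfErr b θ (k + 1)) {A B : ℤ}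
    (hA : A ≠ 0) {k : ℕ} (hAk : |A| < cfDen b (k + 2)) : |cfErr b θ (k + 1)| ≤ |A * θ - B| := by
  obtain ⟨X, Y, hB, hA'⟩ := exists_eq_cfNum_cfDen_combination k A B
  have hQ₁ := one_le_cfDen_succ hb k
  have hQ₂ : 1 ≤ cfDen b (k + 2) := one_le_cfDen_succ hb (k + 1)
  have hX : X ≠ 0 := by
    rintro rfl
    rw [zero_mul, zero_add] at hA'
    rw [hA', abs_mul, abs_of_pos (by omega : 0 < cfDen b (k + 2))] at hAk
    have : Y ≠ 0 := by rintro rfl; exact hA (by simpa using hA')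
    nlinarith [Int.one_le_abs this]
  have hXY : X * Y ≤ 0 := by
    by_contra! hXY
    rcases lt_or_gt_of_ne hX with hX | hX
    · have : Y < 0 := by nlinarith
      rw [hA', abs_of_neg (by nlinarith)] at hAk
      nlinarith
    · have : 0 < Y := by nlinarith
      rw [hA', abs_of_pos (by nlinarith)] at hAk
      nlinarith
  have hee : cfErr b θ (k + 1) * cfErr b θ (k + 2) < 0 := by
    have h₂ : 0 < (-1) ^ (k + 1) * cfErr b θ (k + 2) := hsign (k + 1)
    have hs : (-1 : ℝ) ^ k * (-1) ^ k = 1 := by rw [← mul_pow]; norm_num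
    have h := mul_pos (hsign k) h₂
    rw [pow_succ] at h
    linear_combination h - (cfErr b θ (k + 1) * cfErr b θ (k + 2)) * hs
  -- `X, Y` have opposite signs and so do the two errors, so both terms below have the same sign.
  have hsplit : (A : ℝ) * θ - B = X * cfErr b θ (k + 1) + Y * cfErr b θ (k + 2) := by
    rw [hA', hB, cfErr, cfErr]
    push_cast
    ring
  have hX1 : (1 : ℝ) ≤ X ^ 2 := (one_le_sq_iff_one_le_abs _).2 (by exact_mod_cast Int.one_le_abs hX)
  have hXYR : (X : ℝ) * Y ≤ 0 := by exact_mod_cast hXY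
  rw [hsplit, ← sq_le_sq]
  nlinarith [mul_nonneg_of_nonpos_of_nonpos hXYR hee.le,
    mul_nonneg (sub_nonneg.2 hX1) (sq_nonneg (cfErr b θ (k + 1))),
    sq_nonneg ((Y : ℝ) * cfErr b θ (k + 2))]

theorem exists_eq_mul_cfNum_cfDen {θ : ℝ} (hsign : ∀ k, 0 < (-1) ^ k * cfErr b θ (k + 1))
    {A B : ℤ} (hA : A ≠ 0) (h : |(A : ℝ)| * |A * θ - B| < 1 / 2) :
    ∃ k : ℕ, ∃ g : ℤ, B = g * cfNum b (k + 1) ∧ A = g * cfDen b (k + 1) := by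
  obtain ⟨k, hk₁, hk₂⟩ := exists_cfDen_le_lt hb (Int.one_le_abs hA)
  have hbest := abs_cfErr_succ_le hb hsign (B := B) hA hk₂
  obtain ⟨X, Y, hB, hA'⟩ := exists_eq_cfNum_cfDen_combination k A B
  have hcross : (-1) ^ k * (Y : ℝ)
      = cfDen b (k + 1) * (B - A * θ) + A * cfErr b θ (k + 1) := by
    have hdet : ((cfNum b (k + 2) * cfDen b (k + 1) - cfNum b (k + 1) * cfDen b (k + 2) : ℤ) : ℝ)
        = (-1) ^ (k + 2) := by
      exact_mod_cast cfNum_mul_cfDen_sub (k + 1)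
    push_cast at hdet
    rw [hA', hB, cfErr]
    push_cast
    linear_combination (-(Y : ℝ)) * hdet
  have hk₁R : (cfDen b (k + 1) : ℝ) ≤ |(A : ℝ)| := by exact_mod_cast hk₁
  have hY : |(Y : ℝ)| < 1 := by
    calc |(Y : ℝ)| = |cfDen b (k + 1) * (B - A * θ) + A * cfErr b θ (k + 1)| := by
          rw [← hcross, abs_mul, abs_pow, abs_neg, abs_one, one_pow, one_mul]
      _ ≤ |(A : ℝ)| * |A * θ - B| + |(A : ℝ)| * |A * θ - B| := by
          refine (abs_add_le _ _).trans (add_le_add ?_ ?_) <;> rw [abs_mul]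
          · rw [abs_sub_comm, abs_of_pos (cfDen_succ_pos hb k)]
            exact mul_le_mul_of_nonneg_right hk₁R (abs_nonneg _)
          · exact mul_le_mul_of_nonneg_left hbest (abs_nonneg _)
      _ < 1 := by linarith
  have hY0 : Y = 0 := by
    rw [← Int.cast_abs] at hY
    exact Int.abs_lt_one_iff.mp (by exact_mod_cast hY)
  exact ⟨k, X, by simpa [hY0] using hB, by simpa [hY0] using hA'⟩

end

theorem isCoprime_of_dvd_of_gcd_eq_one {g r m n x y : ℤ} (h : Int.gcd r (Int.gcd m n) = 1)
    (hr : g ∣ x * n - r) (hm : g ∣ m + y * n) : IsCoprime n g := by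
  rw [Int.isCoprime_iff_gcd_eq_one]
  have hdn : (Int.gcd n g : ℤ) ∣ n := Int.gcd_dvd_left n g
  have hdg : (Int.gcd n g : ℤ) ∣ g := Int.gcd_dvd_right n g
  have hdr : (Int.gcd n g : ℤ) ∣ r := by
    simpa using (hdn.mul_left x).sub (hdg.trans hr)
  have hdm : (Int.gcd n g : ℤ) ∣ m := by
    simpa using (hdg.trans hm).sub (hdn.mul_left y)
  exact Nat.dvd_one.mp (h ▸ Int.dvd_gcd hdr (Int.dvd_coe_gcd hdm hdn))

theorem sq_mul_abs_sub_div_mul_abs_sub {n : ℝ} (hn : n ≠ 0) (S r m R θ : ℝ) :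
    n ^ 2 * (|S - r / n| * |S * θ - (r * θ + m) / n - R|)
      = |S * n - r| * |(S * n - r) * θ - (m + R * n)| := by
  have h₁ : S - r / n = (S * n - r) / n := by field_simp
  have h₂ : S * θ - (r * θ + m) / n - R = ((S * n - r) * θ - (m + R * n)) / n := by
    field_simp
    ring
  rw [h₁, h₂, abs_div, abs_div, ← sq_abs n]
  field_simp

theorem key_lemma_reduced_form_general
    (θ : ℝ)
    (b : ℕ → ℤ) (hb : ∀ i : ℕ, 1 ≤ i → 1 ≤ b i)
    (p q : ℤ → ℤ)
    (hpm1 : p (-1) = 1) (hqm1 : q (-1) = 0)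
    (hp0 : p 0 = b 0) (hq0 : q 0 = 1)
    (hprec : ∀ i : ℕ, p ((i : ℤ) + 1) = b (i + 1) * p i + p ((i : ℤ) - 1))
    (hqrec : ∀ i : ℕ, q ((i : ℤ) + 1) = b (i + 1) * q i + q ((i : ℤ) - 1))
    (hconv : Filter.Tendsto (fun i : ℕ => (p i : ℝ) / (q i : ℝ)) Filter.atTop (nhds θ))
    (t : ℤ → ℝ) (ht0 : t 0 = θ) (htrec : ∀ i : ℕ, t ((i : ℤ) + 1) = (t i - b i)⁻¹)
    -- φ = (rθ + m)/n in reduced form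
    (n : ℕ) (r m : ℤ)
    (hgcd : Int.gcd r (Int.gcd m n) = 1)
    (φ : ℝ) (hφ : φ = (r * θ + m) / n)
    (S : ℤ)
    (R : ℤ) (hR : R = round ((S : ℝ) * θ - φ))
    (lam : ℝ) (hlam : lam = |(S : ℝ) - (r : ℝ) / n| * distNearestInt ((S : ℝ) * θ - φ))
    (hsmall : 0 < (n : ℝ) ^ 2 * lam ∧ (n : ℝ) ^ 2 * lam < 1 / 2) :
    ∃ i : ℤ, -1 ≤ i ∧ ∃ g : ℤ, IsUnit (g : ZMod n) ∧
      m + R * n = g * p i ∧ S * n - r = g * q i ∧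
      (n : ℝ) ^ 2 * lam = (g : ℝ) ^ 2 * (t (i + 1) + (q (i - 1) : ℝ) / (q i : ℝ))⁻¹ := by
  have hp (k : ℕ) : p k = cfNum b (k + 1) := by
    simpa [hpm1, hp0] using (contRec_succ_eq_of_rec hprec k).symm
  have hq (k : ℕ) : q k = cfDen b (k + 1) := by
    simpa [hqm1, hq0] using (contRec_succ_eq_of_rec hqrec k).symm
  have hsign := neg_one_pow_mul_cfErr_succ_pos hb (θ := θ) <| by
    unfold cfConv
    simpa only [hp, hq] using hconv
  have hn : (n : ℝ) ≠ 0 := fun h => by simp [h] at hsmall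
  have hlamAB : (n : ℝ) ^ 2 * lam
      = |((S * n - r : ℤ) : ℝ)| * |((S * n - r : ℤ) : ℝ) * θ - ((m + R * n : ℤ) : ℝ)| := by
    rw [hlam, distNearestInt, ← hR, hφ, sq_mul_abs_sub_div_mul_abs_sub hn]
    push_cast
    rfl
  have hA : S * n - r ≠ 0 := fun h => by
    rw [hlamAB, h] at hsmall
    simp at hsmall
  obtain ⟨k, g, hB, hA'⟩ := exists_eq_mul_cfNum_cfDen hb hsign hA (hlamAB ▸ hsmall.2)
  have hcop :=
    isCoprime_of_dvd_of_gcd_eq_one hgcd (hA' ▸ dvd_mul_right g _) (hB ▸ dvd_mul_right g _)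
  refine ⟨k, by omega, g, (ZMod.coe_int_isUnit_iff_isCoprime g n).2 hcop,
    by rw [hB, hp], by rw [hA', hq], ?_⟩
  have hq' : q (k - 1) = cfDen b k := by
    simpa [hqm1, hq0] using (contRec_eq_of_rec hqrec k).symm
  rw [hq', hq, eq_neg_cfErr_div (fun j h => by simpa [h] using hsign j) ht0 htrec k,
    inv_neg_cfErr_div_add_cfDen_div hb (hsign k),
    hlamAB, hA', hB, abs_mul_abs_mul_cfDen_sub, abs_of_pos (cfDen_succ_pos hb k)]

/-- Key Lemma: let θ be irrational with convergents `𝒫ᵢ = (pᵢ, qᵢ)` (indexed by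
`ℤ`, with `𝒫₋₁ = (1,0)`), `φ = (rθ+m)/n` in reduced form, `S` a nonzero integer,
`R` the nearest integer to `Sθ − φ`, and `λ(S) = |S − r/n|·‖Sθ − φ‖`.  If
`0 < n²·λ(S) < 1/2`, then there are integers `i ≥ −1` and `g` with `g`
invertible mod `n`, such that `(m + Rn, Sn − r) = g·𝒫ᵢ` and `n²·λ(S) = g²/μᵢ`,
where `μᵢ = t (i+1) + q_{i-1}/qᵢ` and `t` is the sequence of complete quotients. -/
theorem key_lemma_reduced_form
    (θ : ℝ) (hθ : Irrational θ)
    (b : ℕ → ℤ) (hb : ∀ i : ℕ, 1 ≤ i → 1 ≤ b i)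
    (p q : ℤ → ℤ)
    (hpm1 : p (-1) = 1) (hqm1 : q (-1) = 0)
    (hp0 : p 0 = b 0) (hq0 : q 0 = 1)
    (hprec : ∀ i : ℕ, p ((i : ℤ) + 1) = b (i + 1) * p i + p ((i : ℤ) - 1))
    (hqrec : ∀ i : ℕ, q ((i : ℤ) + 1) = b (i + 1) * q i + q ((i : ℤ) - 1))
    (hconv : Filter.Tendsto (fun i : ℕ => (p i : ℝ) / (q i : ℝ)) Filter.atTop (nhds θ))
    (t : ℤ → ℝ) (ht0 : t 0 = θ) (htrec : ∀ i : ℕ, t ((i : ℤ) + 1) = (t i - b i)⁻¹)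
    -- φ = (rθ + m)/n in reduced form
    (n : ℕ) (hn : 2 ≤ n) (r m : ℤ)
    (hr : 0 ≤ r ∧ r < n) (hm : 0 ≤ m ∧ m < n)
    (hgcd : Int.gcd r (Int.gcd m n) = 1)
    (φ : ℝ) (hφ : φ = (r * θ + m) / n)
    (S : ℤ) (hS : S ≠ 0)
    (R : ℤ) (hR : R = round ((S : ℝ) * θ - φ))
    (lam : ℝ) (hlam : lam = |(S : ℝ) - (r : ℝ) / n| * distNearestInt ((S : ℝ) * θ - φ))
    (hsmall : 0 < (n : ℝ) ^ 2 * lam ∧ (n : ℝ) ^ 2 * lam < 1 / 2) :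
    ∃ i : ℤ, -1 ≤ i ∧ ∃ g : ℤ, IsUnit (g : ZMod n) ∧
      m + R * n = g * p i ∧ S * n - r = g * q i ∧
      (n : ℝ) ^ 2 * lam = (g : ℝ) ^ 2 * (t (i + 1) + (q (i - 1) : ℝ) / (q i : ℝ))⁻¹ :=
  key_lemma_reduced_form_general θ b hb p q hpm1 hqm1 hp0 hq0 hprec hqrec hconv t ht0 htrec n r m
    hgcd φ hφ S R hR lam hlam hsmall
end

section
/- For every Hurwitzian number θ (a number whose continued fraction is [b₀; b₁, …, b_m, f₁(1), …, f_R(1), f₁(2), …, f_R(2), …] where the fᵢ are integer-valued polynomials) and every integer n ≥ 2, the sequence of convergents 𝒫ᵢ = (pᵢ, qᵢ) of θ is eventually periodic modulo n. -/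
lemma clear_denoms' (P : Polynomial ℚ) :
    ∃ (D : ℕ) (Q : Polynomial ℤ), 0 < D ∧
      ∀ x : ℕ, (D : ℚ) * P.eval (x : ℚ) = ((Q.eval (x : ℤ) : ℤ) : ℚ) := by
  induction P using Polynomial.induction_on with
  | C a =>
      refine ⟨a.den, Polynomial.C a.num, a.pos, fun x => ?_⟩
      simp only [Polynomial.eval_C]
      rw [mul_comm]
      exact_mod_cast Rat.mul_den_eq_num a
  | add p q hp hq =>
      obtain ⟨D1, Q1, hD1, h1⟩ := hp
      obtain ⟨D2, Q2, hD2, h2⟩ := hq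
      refine ⟨D1 * D2, (D2 : ℤ) • Q1 + (D1 : ℤ) • Q2, Nat.mul_pos hD1 hD2, fun x => ?_⟩
      simp only [Polynomial.eval_add, Polynomial.eval_smul, smul_eq_mul, Polynomial.eval_mul]
      push_cast
      rw [mul_add, ← h1 x, ← h2 x]
      ring
  | monomial m a ih =>
      obtain ⟨D, Q, hD, h⟩ := ih
      refine ⟨D, Q * Polynomial.X, hD, fun x => ?_⟩
      simp only [Polynomial.eval_mul, Polynomial.eval_X, Polynomial.eval_C, pow_succ]
      push_cast
      rw [← mul_assoc, ← mul_assoc, ← h x]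
      simp only [Polynomial.eval_mul, Polynomial.eval_C]
      ring

lemma poly_val_periodic (g : ℕ → ℤ) (P : Polynomial ℚ)
    (hg : ∀ i : ℕ, ((g i : ℚ)) = P.eval (i : ℚ)) (n : ℕ) (hn : 1 ≤ n) :
    ∃ S : ℕ, 1 ≤ S ∧ ∀ i : ℕ, g (i + S) ≡ g i [ZMOD (n : ℤ)] := by
  obtain ⟨D, Q, hD, hQ⟩ := clear_denoms' P
  refine ⟨D * n, Nat.mul_pos hD hn, fun i => ?_⟩
  have h1 : ∀ x : ℕ, (D : ℤ) * g x = Q.eval (x : ℤ) := by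
    intro x
    have := hQ x
    rw [← hg x] at this
    exact_mod_cast this
  have h2 : ((D : ℤ) * n) ∣ Q.eval ((i + D * n : ℕ) : ℤ) - Q.eval (i : ℤ) := by
    refine dvd_trans ?_ (Polynomial.sub_dvd_eval_sub _ _ Q)
    push_cast
    exact ⟨1, by ring⟩
  rw [← h1, ← h1, ← mul_sub] at h2
  have h3 : (n : ℤ) ∣ g (i + D * n) - g i := by
    have hD' : (D : ℤ) ≠ 0 := by exact_mod_cast hD.ne'
    exact (mul_dvd_mul_iff_left hD').mp h2
  exact Int.ModEq.symm (Int.modEq_iff_dvd.mpr (by omega))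

/-- For every Hurwitzian number (partial quotient sequence `b` given by an
initial block `b₀, …, b_M` followed by the repeating blocks
`f₁(1), …, f_R(1), f₁(2), …, f_R(2), …` of values of integer-valued polynomials
`f₁, …, f_R`), the sequence of convergents `𝒫ᵢ = (pᵢ, qᵢ)` is eventually
periodic modulo every integer `n ≥ 2`. -/
theorem hurwitzian_convergents_eventually_periodic
    (b : ℕ → ℤ) (hb : ∀ i : ℕ, 1 ≤ i → 1 ≤ b i)
    (M R : ℕ) (hR : 1 ≤ R)
    (f : Fin R → ℕ → ℤ)
    (hfpoly : ∀ r : Fin R, ∃ P : Polynomial ℚ, ∀ i : ℕ, ((f r i : ℚ)) = P.eval (i : ℚ))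
    (hfpos : ∀ r : Fin R, ∀ i : ℕ, 1 ≤ i → 1 ≤ f r i)
    (hblock : ∀ i : ℕ, ∀ r : Fin R, b (M + 1 + i * R + (r : ℕ)) = f r (i + 1))
    (p q : ℕ → ℤ)
    (hp0 : p 0 = b 0) (hq0 : q 0 = 1)
    (hp1 : p 1 = b 1 * b 0 + 1) (hq1 : q 1 = b 1)
    (hprec : ∀ i : ℕ, p (i + 2) = b (i + 2) * p (i + 1) + p i)
    (hqrec : ∀ i : ℕ, q (i + 2) = b (i + 2) * q (i + 1) + q i) :
    ∀ n : ℕ, 2 ≤ n → ∃ T : ℕ, 1 ≤ T ∧ ∃ N : ℕ, ∀ i : ℕ, N ≤ i →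
      p (i + T) ≡ p i [ZMOD (n : ℤ)] ∧ q (i + T) ≡ q i [ZMOD (n : ℤ)] := by
  intro n hn
  -- each f r is periodic mod n
  have key : ∀ r : Fin R, ∃ S : ℕ, 1 ≤ S ∧ ∀ i : ℕ, f r (i + S) ≡ f r i [ZMOD (n : ℤ)] := by
    intro r
    obtain ⟨P, hP⟩ := hfpoly r
    exact poly_val_periodic (f r) P hP n (by omega)
  choose S hS1 hS2 using key
  set S0 : ℕ := ∏ r : Fin R, S r with hS0def
  have hS0pos : 1 ≤ S0 := Finset.one_le_prod' (fun r _ => hS1 r)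
  have hdvd : ∀ r : Fin R, S r ∣ S0 := fun r => Finset.dvd_prod_of_mem _ (Finset.mem_univ r)
  -- f r is periodic mod n with common period S0
  have fiter : ∀ (r : Fin R) (k i : ℕ), f r (i + S r * k) ≡ f r i [ZMOD (n : ℤ)] := by
    intro r k
    induction k with
    | zero => intro i; simp [Int.ModEq.refl]
    | succ k ih =>
        intro i
        have e : i + S r * (k + 1) = (i + S r * k) + S r := by ring
        rw [e]
        exact (hS2 r (i + S r * k)).trans (ih i)
  have fS0 : ∀ (r : Fin R) (i : ℕ), f r (i + S0) ≡ f r i [ZMOD (n : ℤ)] := by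
    intro r i
    obtain ⟨k, hk⟩ := hdvd r
    rw [hk]
    exact fiter r k i
  set T : ℕ := R * S0 with hTdef
  have hTpos : 1 ≤ T := Nat.mul_pos hR hS0pos
  -- b is eventually periodic mod n with period T
  have hbper : ∀ i : ℕ, M + 1 ≤ i → b (i + T) ≡ b i [ZMOD (n : ℤ)] := by
    intro i hi
    obtain ⟨j, r, hrR, hi'⟩ : ∃ j r, r < R ∧ i = M + 1 + j * R + r := by
      refine ⟨(i - (M + 1)) / R, (i - (M + 1)) % R, Nat.mod_lt _ (by omega), ?_⟩
      have hdm := Nat.div_add_mod (i - (M + 1)) R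
      rw [Nat.mul_comm]
      omega
    have e1 : b i = f ⟨r, hrR⟩ (j + 1) := by
      rw [hi']; exact hblock j ⟨r, hrR⟩
    have e2 : b (i + T) = f ⟨r, hrR⟩ (j + S0 + 1) := by
      have hidx : i + T = M + 1 + (j + S0) * R + r := by
        rw [hi', hTdef]; ring
      rw [hidx]; exact hblock (j + S0) ⟨r, hrR⟩
    rw [e1, e2, show j + S0 + 1 = (j + 1) + S0 from by ring]
    exact fS0 ⟨r, hrR⟩ (j + 1)
  have hbiter : ∀ (m i : ℕ), M + 1 ≤ i → b (i + m * T) ≡ b i [ZMOD (n : ℤ)] := by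
    intro m
    induction m with
    | zero => intro i _; simp [Int.ModEq.refl]
    | succ m ih =>
        intro i hi
        have e : i + (m + 1) * T = (i + m * T) + T := by ring
        rw [e]
        exact (hbper (i + m * T) (by omega)).trans (ih i hi)
  -- pigeonhole on states
  haveI : NeZero n := ⟨by omega⟩
  let F : ℕ → ZMod n × ZMod n × ZMod n × ZMod n := fun k =>
    ((p (M + 1 + k * T) : ZMod n), (p (M + 1 + k * T + 1) : ZMod n),
     (q (M + 1 + k * T) : ZMod n), (q (M + 1 + k * T + 1) : ZMod n))
  obtain ⟨k1, k2, hne, heq⟩ := Finite.exists_ne_map_eq_of_infinite F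
  have main : ∀ k1 k2 : ℕ, k1 < k2 → F k1 = F k2 →
      ∃ T' : ℕ, 1 ≤ T' ∧ ∃ N : ℕ, ∀ i : ℕ, N ≤ i →
        p (i + T') ≡ p i [ZMOD (n : ℤ)] ∧ q (i + T') ≡ q i [ZMOD (n : ℤ)] := by
    clear hne heq k1 k2
    intro k1 k2 hlt heq
    set N' : ℕ := M + 1 + k1 * T with hN'def
    set T' : ℕ := (k2 - k1) * T with hT'def
    have hT' : 1 ≤ T' := Nat.mul_pos (by omega) hTpos
    have hNT : N' + T' = M + 1 + k2 * T := by
      have h : k1 * T + (k2 - k1) * T = k2 * T := by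
        rw [← Nat.add_mul]; congr 1; omega
      omega
    have hc := Prod.mk.injEq _ _ _ _ ▸ heq
    simp only [F, Prod.mk.injEq] at heq
    obtain ⟨e1, e2, e3, e4⟩ := heq
    rw [ZMod.intCast_eq_intCast_iff] at e1 e2 e3 e4
    have g0 : p (N' + T') ≡ p N' [ZMOD (n : ℤ)] ∧ q (N' + T') ≡ q N' [ZMOD (n : ℤ)] := by
      rw [hNT]; exact ⟨e1.symm, e3.symm⟩
    have g1 : p (N' + 1 + T') ≡ p (N' + 1) [ZMOD (n : ℤ)] ∧
        q (N' + 1 + T') ≡ q (N' + 1) [ZMOD (n : ℤ)] := by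
      rw [show N' + 1 + T' = (N' + T') + 1 from by ring, hNT]
      exact ⟨e2.symm, e4.symm⟩
    have hG : ∀ j : ℕ,
        (p (N' + j + T') ≡ p (N' + j) [ZMOD (n : ℤ)] ∧
          q (N' + j + T') ≡ q (N' + j) [ZMOD (n : ℤ)]) ∧
        (p (N' + (j + 1) + T') ≡ p (N' + (j + 1)) [ZMOD (n : ℤ)] ∧
          q (N' + (j + 1) + T') ≡ q (N' + (j + 1)) [ZMOD (n : ℤ)]) := by
      intro j
      induction j with
      | zero => exact ⟨g0, g1⟩
      | succ j ih =>
          obtain ⟨hj, hj1⟩ := ih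
          refine ⟨hj1, ?_⟩
          have hbcong : b (N' + j + 2 + T') ≡ b (N' + j + 2) [ZMOD (n : ℤ)] := by
            rw [show N' + j + 2 + T' = (N' + j + 2) + (k2 - k1) * T from by rw [hT'def]]
            exact hbiter (k2 - k1) (N' + j + 2) (by omega)
          have ep : p (N' + j + 2 + T') = b (N' + j + 2 + T') * p (N' + j + 1 + T') + p (N' + j + T') := by
            have := hprec (N' + j + T')
            rw [show N' + j + 2 + T' = N' + j + T' + 2 from by ring,
                show N' + j + 1 + T' = N' + j + T' + 1 from by ring]
            exact this
          have eq' : q (N' + j + 2 + T') = b (N' + j + 2 + T') * q (N' + j + 1 + T') + q (N' + j + T') := by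
            have := hqrec (N' + j + T')
            rw [show N' + j + 2 + T' = N' + j + T' + 2 from by ring,
                show N' + j + 1 + T' = N' + j + T' + 1 from by ring]
            exact this
          have ep2 : p (N' + j + 2) = b (N' + j + 2) * p (N' + j + 1) + p (N' + j) := hprec (N' + j)
          have eq2 : q (N' + j + 2) = b (N' + j + 2) * q (N' + j + 1) + q (N' + j) := hqrec (N' + j)
          constructor
          · rw [show N' + (j + 1 + 1) + T' = N' + j + 2 + T' from by ring,
                show N' + (j + 1 + 1) = N' + j + 2 from by ring, ep, ep2]
            exact (hbcong.mul (by rw [show N' + (j+1) + T' = N' + j + 1 + T' from by ring] at hj1; exact hj1.1)).add hj.1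
          · rw [show N' + (j + 1 + 1) + T' = N' + j + 2 + T' from by ring,
                show N' + (j + 1 + 1) = N' + j + 2 from by ring, eq', eq2]
            exact (hbcong.mul (by rw [show N' + (j+1) + T' = N' + j + 1 + T' from by ring] at hj1; exact hj1.2)).add hj.2
    refine ⟨T', hT', N', fun i hi => ?_⟩
    obtain ⟨j, rfl⟩ : ∃ j, i = N' + j := ⟨i - N', by omega⟩
    have := (hG j).1
    rw [show N' + j + T' = N' + j + T' from rfl] at this
    exact ⟨by rw [Nat.add_comm (N'+j) T'] at this ⊢ <;> exact this.1, by
      have := (hG j).1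
      rw [Nat.add_comm (N'+j) T'] at this ⊢
      exact this.2⟩
  rcases hne.lt_or_gt with h | h
  · exact main k1 k2 h heq
  · exact main k2 k1 h heq.symm
end

section
/- Let 1 ≤ s < n be integers, and let (Pᵢ, Qᵢ) be the i-th leaper of e^{1/s}. Then the i-th leaper of e^{1/(n−s)} is congruent to (−1)ⁱ·(Qᵢ, Pᵢ) modulo n. -/
/-- If `1 ≤ s < n` and `(Pᵢ, Qᵢ)`, `(Pᵢ', Qᵢ')` are the leapers of `e^{1/s}` and
of `e^{1/(n−s)}` respectively (each satisfying `ℒ₋₁ = (1,−1)`, `ℒ₀ = (1,1)`,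
`ℒ_{j+1} = (2j+1)·2t·ℒ_j + ℒ_{j−1}` for the appropriate `t`), then the `i`-th
leaper of `e^{1/(n−s)}` is congruent to `(−1)ⁱ·(Qᵢ, Pᵢ)` modulo `n`. -/
theorem leapers_complementary_mod
    (s n : ℕ) (hs : 1 ≤ s) (hsn : s < n)
    (P Q : ℤ → ℤ)
    (hPm1 : P (-1) = 1) (hQm1 : Q (-1) = -1)
    (hP0 : P 0 = 1) (hQ0 : Q 0 = 1)
    (hPrec : ∀ j : ℕ, P ((j : ℤ) + 1) = (2 * (j : ℤ) + 1) * (2 * (s : ℤ)) * P j + P ((j : ℤ) - 1))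
    (hQrec : ∀ j : ℕ, Q ((j : ℤ) + 1) = (2 * (j : ℤ) + 1) * (2 * (s : ℤ)) * Q j + Q ((j : ℤ) - 1))
    (P' Q' : ℤ → ℤ)
    (hPm1' : P' (-1) = 1) (hQm1' : Q' (-1) = -1)
    (hP0' : P' 0 = 1) (hQ0' : Q' 0 = 1)
    (hPrec' : ∀ j : ℕ, P' ((j : ℤ) + 1) =
      (2 * (j : ℤ) + 1) * (2 * ((n : ℤ) - (s : ℤ))) * P' j + P' ((j : ℤ) - 1))
    (hQrec' : ∀ j : ℕ, Q' ((j : ℤ) + 1) =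
      (2 * (j : ℤ) + 1) * (2 * ((n : ℤ) - (s : ℤ))) * Q' j + Q' ((j : ℤ) - 1)) :
    ∀ i : ℕ, P' i ≡ (-1) ^ i * Q i [ZMOD (n : ℤ)] ∧
      Q' i ≡ (-1) ^ i * P i [ZMOD (n : ℤ)] := by
  have hn0 : (n : ℤ) ≡ 0 [ZMOD (n : ℤ)] := Int.modEq_zero_iff_dvd.mpr dvd_rfl
  have key : ∀ i : ℕ,
      (P' (i : ℤ) ≡ (-1) ^ i * Q (i : ℤ) [ZMOD (n : ℤ)] ∧
        Q' (i : ℤ) ≡ (-1) ^ i * P (i : ℤ) [ZMOD (n : ℤ)]) ∧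
      (P' ((i : ℤ) - 1) ≡ (-1) ^ (i + 1) * Q ((i : ℤ) - 1) [ZMOD (n : ℤ)] ∧
        Q' ((i : ℤ) - 1) ≡ (-1) ^ (i + 1) * P ((i : ℤ) - 1) [ZMOD (n : ℤ)]) := by
    intro i
    induction i with
    | zero =>
      norm_num [hP0, hQ0, hP0', hQ0', hPm1, hQm1, hPm1', hQm1']
    | succ j ih =>
      obtain ⟨⟨hP2, hQ2⟩, hP1, hQ1⟩ := ih
      have hcoef : (2 * (j : ℤ) + 1) * (2 * ((n : ℤ) - (s : ℤ)))
          ≡ (2 * (j : ℤ) + 1) * (2 * ((0 : ℤ) - (s : ℤ))) [ZMOD (n : ℤ)] :=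
        (Int.ModEq.refl _).mul ((Int.ModEq.refl 2).mul (hn0.sub (Int.ModEq.refl _)))
      have cast1 : ((j + 1 : ℕ) : ℤ) = (j : ℤ) + 1 := by push_cast; ring
      have cast2 : ((j + 1 : ℕ) : ℤ) - 1 = (j : ℤ) := by push_cast; ring
      refine ⟨⟨?_, ?_⟩, ?_, ?_⟩
      · rw [cast1]
        calc P' ((j : ℤ) + 1)
            = (2 * (j : ℤ) + 1) * (2 * ((n : ℤ) - (s : ℤ))) * P' (j : ℤ) + P' ((j : ℤ) - 1) :=
              hPrec' j
          _ ≡ (2 * (j : ℤ) + 1) * (2 * ((0 : ℤ) - (s : ℤ))) * ((-1) ^ j * Q (j : ℤ))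
              + (-1) ^ (j + 1) * Q ((j : ℤ) - 1) [ZMOD (n : ℤ)] := (hcoef.mul hP2).add hP1
          _ = (-1) ^ (j + 1) * Q ((j : ℤ) + 1) := by rw [hQrec j]; ring
      · rw [cast1]
        calc Q' ((j : ℤ) + 1)
            = (2 * (j : ℤ) + 1) * (2 * ((n : ℤ) - (s : ℤ))) * Q' (j : ℤ) + Q' ((j : ℤ) - 1) :=
              hQrec' j
          _ ≡ (2 * (j : ℤ) + 1) * (2 * ((0 : ℤ) - (s : ℤ))) * ((-1) ^ j * P (j : ℤ))
              + (-1) ^ (j + 1) * P ((j : ℤ) - 1) [ZMOD (n : ℤ)] := (hcoef.mul hQ2).add hQ1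
          _ = (-1) ^ (j + 1) * P ((j : ℤ) + 1) := by rw [hPrec j]; ring
      · rw [cast2]
        have : ((-1 : ℤ)) ^ (j + 1 + 1) = (-1) ^ j := by ring
        rw [this]; exact hP2
      · rw [cast2]
        have : ((-1 : ℤ)) ^ (j + 1 + 1) = (-1) ^ j := by ring
        rw [this]; exact hQ2
  exact fun i => (key i).1
end
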